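/- arXiv:1901.10635 — 2 statements merged into one kernel-verified Lean document; each statement's English description precedes it below -/
import Mathlib

section
/- Weak formulation of the transport PDE system (the Theorem of Section 3.1): The coefficient functions satisfy the ODE system (d/dt) α_i(t) = Σ_{j∈S} α_j(t) T_{ji} + c_i α_i(t)(G + F_i) M^{−1} for all i ∈ S and all t ≥ 0, if and only if for all i ∈ S, k ∈ {1,...,K−1}, m ∈ {1,...,N_k} and t ≥ 0 the projected weak-form equation holds: ∫_{D_k} [ ∂_t u_i(x,t) − Σ_{j∈S} u_j(x,t) T_{ji} ] φ_m^k(x) dx − c_i ∫_{D_k} u_i(x,t) (φ_m^k)'(x) dx − c_i [α_i(t) F_i]_{(k,m)} = 0, where [α_i(t) F_i]_{(k,m)} denotes the component of the row vector α_i(t) F_i corresponding to basis function φ_m^k. -/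
open Filter Topology Set MeasureTheory intervalIntegral Matrix

/-- The DG mass matrix `M`: block diagonal with `[M^k]_{pn} = ∫_{D_k} φ_p^k φ_n^k`. -/
noncomputable def dgMass (m : ℕ) (x : Fin (m + 1) → ℝ) (Nb : Fin m → ℕ)
    (φ : (k : Fin m) → Fin (Nb k) → ℝ → ℝ) :
    Matrix ((k : Fin m) × Fin (Nb k)) ((k : Fin m) × Fin (Nb k)) ℝ :=
  fun p q =>
    if p.1 = q.1 then
      ∫ y in (x p.1.castSucc)..(x p.1.succ), φ p.1 p.2 y * φ q.1 q.2 y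
    else 0

/-- The DG stiffness matrix `G`: block diagonal with `[G^k]_{pn} = ∫_{D_k} φ_p^k (φ_n^k)'`. -/
noncomputable def dgStiff (m : ℕ) (x : Fin (m + 1) → ℝ) (Nb : Fin m → ℕ)
    (φ φ' : (k : Fin m) → Fin (Nb k) → ℝ → ℝ) :
    Matrix ((k : Fin m) × Fin (Nb k)) ((k : Fin m) × Fin (Nb k)) ℝ :=
  fun p q =>
    if p.1 = q.1 then
      ∫ y in (x p.1.castSucc)..(x p.1.succ), φ p.1 p.2 y * φ' q.1 q.2 y
    else 0

/-- **Weak formulation of the transport PDE system** (the Theorem of Section 3.1).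
DG stencil with `m = K - 1 ≥ 1` meshes `D_k = [x k.castSucc, x k.succ]`, basis functions
`φ k n` continuously differentiable on the closed mesh (with derivative `φ' k n` there)
and vanishing outside it, with common strictly positive mesh integrals `I k`.  Phases `ι`
with rate matrix `T`, nonzero drifts `c i`, upwind flux matrices `F i`, invertible mass
matrix.  The coefficients `α i t` (with time derivative `α' i t`) satisfy the ODE system
`(d/dt) αᵢ(t) = ∑ⱼ αⱼ(t) T_{ji} + cᵢ αᵢ(t)(G + Fᵢ)M⁻¹` for all `i` and `t ≥ 0`
iff the projected weak-form equations hold for all `i`, all meshes `k`, all basis indices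
`p` and all `t ≥ 0`. -/
theorem dg_weak_formulation
    (m : ℕ) (hm : 1 ≤ m)
    (x : Fin (m + 1) → ℝ) (hx : ∀ k : Fin m, x k.castSucc < x k.succ)
    (Nb : Fin m → ℕ) (hNb : ∀ k, 1 ≤ Nb k)
    (φ φ' : (k : Fin m) → Fin (Nb k) → ℝ → ℝ)
    (hsupp : ∀ k n (y : ℝ), y ∉ Set.Icc (x k.castSucc) (x k.succ) → φ k n y = 0)
    (hderiv : ∀ k n, ∀ y ∈ Set.Icc (x k.castSucc) (x k.succ),
      HasDerivWithinAt (φ k n) (φ' k n y) (Set.Icc (x k.castSucc) (x k.succ)) y)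
    (hcont : ∀ k n, ContinuousOn (φ' k n) (Set.Icc (x k.castSucc) (x k.succ)))
    (I : Fin m → ℝ) (hIpos : ∀ k, 0 < I k)
    (hIval : ∀ k n, (∫ y in (x k.castSucc)..(x k.succ), φ k n y) = I k)
    (ι : Type) [Fintype ι] [Nonempty ι]
    (T : ι → ι → ℝ) (c : ι → ℝ) (hc : ∀ i, c i ≠ 0)
    (hMunit : IsUnit (dgMass m x Nb φ))
    (F : ι → Matrix ((k : Fin m) × Fin (Nb k)) ((k : Fin m) × Fin (Nb k)) ℝ)
    -- upwind flux matrix for positive drift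
    (hFpos_diag : ∀ i, 0 < c i → ∀ (k : Fin m) (p n : Fin (Nb k)),
      F i ⟨k, p⟩ ⟨k, n⟩ = -(φ k p (x k.succ) * φ k n (x k.succ)))
    (hFpos_sub : ∀ i, 0 < c i → ∀ (j k : Fin m), (j : ℕ) + 1 = (k : ℕ) →
      ∀ (p : Fin (Nb j)) (n : Fin (Nb k)),
      F i ⟨j, p⟩ ⟨k, n⟩ = (I k / I j) * φ j p (x j.succ) * φ k n (x k.castSucc))
    (hFpos_zero : ∀ i, 0 < c i → ∀ (j k : Fin m),
      (j : ℕ) ≠ (k : ℕ) → (j : ℕ) + 1 ≠ (k : ℕ) →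
      ∀ (p : Fin (Nb j)) (n : Fin (Nb k)), F i ⟨j, p⟩ ⟨k, n⟩ = 0)
    -- upwind flux matrix for negative drift
    (hFneg_diag : ∀ i, c i < 0 → ∀ (k : Fin m) (p n : Fin (Nb k)),
      F i ⟨k, p⟩ ⟨k, n⟩ = φ k p (x k.castSucc) * φ k n (x k.castSucc))
    (hFneg_sup : ∀ i, c i < 0 → ∀ (j k : Fin m), (j : ℕ) = (k : ℕ) + 1 →
      ∀ (p : Fin (Nb j)) (n : Fin (Nb k)),
      F i ⟨j, p⟩ ⟨k, n⟩ = -((I k / I j) * φ j p (x j.castSucc) * φ k n (x k.succ)))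
    (hFneg_zero : ∀ i, c i < 0 → ∀ (j k : Fin m),
      (j : ℕ) ≠ (k : ℕ) → (j : ℕ) ≠ (k : ℕ) + 1 →
      ∀ (p : Fin (Nb j)) (n : Fin (Nb k)), F i ⟨j, p⟩ ⟨k, n⟩ = 0)
    (α α' : ι → ℝ → ((k : Fin m) × Fin (Nb k)) → ℝ)
    (hα : ∀ i t q, HasDerivAt (fun s => α i s q) (α' i t q) t) :
    -- ODE system  ⟺  projected weak form
    (∀ i t, 0 ≤ t → ∀ q, α' i t q
        = (∑ j, α j t q * T j i)
          + c i * ((α i t) ᵥ* ((dgStiff m x Nb φ φ' + F i) * (dgMass m x Nb φ)⁻¹)) q)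
    ↔ (∀ i (k : Fin m) (p : Fin (Nb k)) t, 0 ≤ t →
        (∫ y in (x k.castSucc)..(x k.succ),
            ((∑ q : (k : Fin m) × Fin (Nb k), α' i t q * φ q.1 q.2 y)
              - ∑ j, (∑ q : (k : Fin m) × Fin (Nb k), α j t q * φ q.1 q.2 y) * T j i)
            * φ k p y)
          - c i * (∫ y in (x k.castSucc)..(x k.succ),
              (∑ q : (k : Fin m) × Fin (Nb k), α i t q * φ q.1 q.2 y) * φ' k p y)
          - c i * ((α i t) ᵥ* (F i)) ⟨k, p⟩ = 0) := by
  classical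
  have hmono : StrictMono x := Fin.strictMono_iff_lt_succ.2 hx
  have contφ : ∀ k n, ContinuousOn (φ k n) (Set.Icc (x k.castSucc) (x k.succ)) :=
    fun k n y hy => (hderiv k n y hy).continuousWithinAt
  -- basis functions from other meshes vanish on the open mesh
  have hvanish : ∀ (k j : Fin m), j ≠ k → ∀ n, ∀ y ∈ Set.Ioo (x k.castSucc) (x k.succ),
      φ j n y = 0 := by
    intro k j hjk n y hy
    apply hsupp
    intro hmem
    rcases lt_or_gt_of_ne hjk with h | h
    · have hle : x j.succ ≤ x k.castSucc := by
        apply hmono.monotone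
        simp only [Fin.le_def, Fin.val_succ, Fin.coe_castSucc]
        have := (Fin.lt_def.1 h); omega
      exact absurd (hmem.2.trans hle) (not_le.2 hy.1)
    · have hle : x k.succ ≤ x j.castSucc := by
        apply hmono.monotone
        simp only [Fin.le_def, Fin.val_succ, Fin.coe_castSucc]
        have := (Fin.lt_def.1 h); omega
      exact absurd (hle.trans hmem.1) (not_le.2 hy.2)
  have hzero_int : ∀ (k j : Fin m), j ≠ k → ∀ n (ψ : ℝ → ℝ),
      IntervalIntegrable (fun y => φ j n y * ψ y) volume (x k.castSucc) (x k.succ) := by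
    intro k j hjk n ψ
    rw [intervalIntegrable_iff_integrableOn_Ioo_of_le (hx k).le]
    refine (integrableOn_congr_fun (g := fun _ => (0:ℝ)) (fun y hy => ?_) measurableSet_Ioo).2
      (integrableOn_zero)
    rw [hvanish k j hjk n y hy, zero_mul]
  have hzero : ∀ (k j : Fin m), j ≠ k → ∀ n (ψ : ℝ → ℝ),
      (∫ y in (x k.castSucc)..(x k.succ), φ j n y * ψ y) = 0 := by
    intro k j hjk n ψ
    rw [intervalIntegral.integral_of_le (hx k).le, MeasureTheory.integral_Ioc_eq_integral_Ioo,
      MeasureTheory.setIntegral_congr_fun (g := fun _ => (0:ℝ)) measurableSet_Ioo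
        (fun y hy => by rw [hvanish k j hjk n y hy, zero_mul])]
    simp
  -- the key integral computation
  have key : ∀ (k : Fin m) (ψ : ℝ → ℝ),
      ContinuousOn ψ (Set.Icc (x k.castSucc) (x k.succ)) →
      ∀ β : ((k : Fin m) × Fin (Nb k)) → ℝ,
      (∫ y in (x k.castSucc)..(x k.succ),
          (∑ q : (k : Fin m) × Fin (Nb k), β q * φ q.1 q.2 y) * ψ y)
        = ∑ q : (k : Fin m) × Fin (Nb k), β q *
            (if q.1 = k then ∫ y in (x q.1.castSucc)..(x q.1.succ), φ q.1 q.2 y * ψ y else 0) := by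
    intro k ψ hψ β
    have hab : x k.castSucc ≤ x k.succ := (hx k).le
    have hint : ∀ q : (k : Fin m) × Fin (Nb k),
        IntervalIntegrable (fun y => β q * (φ q.1 q.2 y * ψ y)) volume
          (x k.castSucc) (x k.succ) := by
      intro q
      by_cases h : q.1 = k
      · obtain ⟨j, n⟩ := q
        dsimp at h; subst h
        refine (ContinuousOn.intervalIntegrable ?_).const_mul _
        rw [Set.uIcc_of_le hab]
        exact (contφ j n).mul hψ
      · exact (hzero_int k q.1 h q.2 ψ).const_mul _
    have hrw : (∫ y in (x k.castSucc)..(x k.succ),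
          (∑ q : (k : Fin m) × Fin (Nb k), β q * φ q.1 q.2 y) * ψ y)
        = ∫ y in (x k.castSucc)..(x k.succ),
            ∑ q : (k : Fin m) × Fin (Nb k), β q * (φ q.1 q.2 y * ψ y) := by
      congr 1; funext y; rw [Finset.sum_mul]; simp [mul_assoc]
    rw [hrw, intervalIntegral.integral_finset_sum (fun q _ => hint q)]
    refine Finset.sum_congr rfl fun q _ => ?_
    rw [intervalIntegral.integral_const_mul]
    by_cases h : q.1 = k
    · obtain ⟨j, n⟩ := q
      dsimp at h ⊢; subst h
      rw [if_pos rfl]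
    · rw [if_neg h, hzero k q.1 h q.2 ψ]
  set M := dgMass m x Nb φ with hMdef
  set G := dgStiff m x Nb φ φ' with hGdef
  have hMdet : IsUnit M.det := (Matrix.isUnit_iff_isUnit_det M).1 hMunit
  have hMinv : M⁻¹ * M = 1 := Matrix.nonsing_inv_mul M hMdet
  have hMinv' : M * M⁻¹ = 1 := Matrix.mul_nonsing_inv M hMdet
  have hMkey : ∀ (k : Fin m) (p : Fin (Nb k)) (β : ((k : Fin m) × Fin (Nb k)) → ℝ),
      (∫ y in (x k.castSucc)..(x k.succ),
          (∑ q : (k : Fin m) × Fin (Nb k), β q * φ q.1 q.2 y) * φ k p y)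
        = (β ᵥ* M) ⟨k, p⟩ := by
    intro k p β
    rw [key k (φ k p) (contφ k p) β]
    simp [hMdef, dgMass, Matrix.vecMul, dotProduct]
  have hGkey : ∀ (k : Fin m) (p : Fin (Nb k)) (β : ((k : Fin m) × Fin (Nb k)) → ℝ),
      (∫ y in (x k.castSucc)..(x k.succ),
          (∑ q : (k : Fin m) × Fin (Nb k), β q * φ q.1 q.2 y) * φ' k p y)
        = (β ᵥ* G) ⟨k, p⟩ := by
    intro k p β
    rw [key k (φ' k p) (hcont k p) β]
    simp [hGdef, dgStiff, Matrix.vecMul, dotProduct]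
  -- rewrite the weak-form LHS in matrix language
  have hfirst : ∀ i t (k : Fin m) (p : Fin (Nb k)),
      (∫ y in (x k.castSucc)..(x k.succ),
          ((∑ q : (k : Fin m) × Fin (Nb k), α' i t q * φ q.1 q.2 y)
            - ∑ j, (∑ q : (k : Fin m) × Fin (Nb k), α j t q * φ q.1 q.2 y) * T j i)
          * φ k p y)
        = ((fun q => α' i t q - ∑ j, α j t q * T j i) ᵥ* M) ⟨k, p⟩ := by
    intro i t k p
    rw [← hMkey k p (fun q => α' i t q - ∑ j, α j t q * T j i)]
    congr 1; funext y
    simp only [sub_mul, Finset.sum_sub_distrib, Finset.sum_mul]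
    congr 1
    rw [Finset.sum_comm]
    exact Finset.sum_congr rfl fun j _ => Finset.sum_congr rfl fun q _ => by ring
  have hsecond : ∀ i t (k : Fin m) (p : Fin (Nb k)),
      (∫ y in (x k.castSucc)..(x k.succ),
          (∑ q : (k : Fin m) × Fin (Nb k), α i t q * φ q.1 q.2 y) * φ' k p y)
        = ((α i t) ᵥ* G) ⟨k, p⟩ := fun i t k p => hGkey k p (α i t)
  constructor
  · intro hODE i k p t ht
    rw [hfirst i t k p, hsecond i t k p]
    have hβ : (fun q => α' i t q - ∑ j, α j t q * T j i)
        = c i • ((α i t) ᵥ* ((G + F i) * M⁻¹)) := by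
      funext q
      have h := hODE i t ht q
      simp only [Pi.smul_apply, smul_eq_mul]
      linarith
    rw [hβ, Matrix.smul_vecMul, Matrix.vecMul_vecMul, Matrix.mul_assoc, hMinv, Matrix.mul_one,
      Matrix.vecMul_add]
    simp only [Pi.smul_apply, Pi.add_apply, smul_eq_mul]
    ring
  · intro hweak i t ht q
    have hv : (fun q => α' i t q - ∑ j, α j t q * T j i) ᵥ* M
        = c i • ((α i t) ᵥ* (G + F i)) := by
      funext r
      obtain ⟨k, p⟩ := r
      have h := hweak i k p t ht
      rw [hfirst i t k p, hsecond i t k p] at h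
      simp only [Matrix.vecMul_add, Pi.smul_apply, Pi.add_apply, smul_eq_mul]
      linarith
    have hv2 : (fun q => α' i t q - ∑ j, α j t q * T j i)
        = c i • ((α i t) ᵥ* ((G + F i) * M⁻¹)) := by
      have := congrArg (fun v => v ᵥ* M⁻¹) hv
      simpa [Matrix.vecMul_vecMul, hMinv', Matrix.vecMul_one, Matrix.smul_vecMul] using this
    have := congrFun hv2 q
    simp only [Pi.smul_apply, smul_eq_mul] at this
    linarith
end

section
/- Conservation of total probability mass (precise form of Remark 3): Assume the generator property Σ_{i∈S} T_{ji} = 0 for every j ∈ S, and assume that (G + F_i) M^{−1} v = 0 (as a column vector in ℝ^N) for every i ∈ S. If the coefficient functions satisfy the ODE system (d/dt) α_i(t) = Σ_{j∈S} α_j(t) T_{ji} + c_i α_i(t)(G + F_i) M^{−1} for all i ∈ S and t ≥ 0, then the total mass Σ_{i∈S} α_i(t)·v = Σ_{i∈S} ∫_{[x_1,x_K]} u_i(x,t) dx is constant in t; in particular Σ_{i∈S} ∫_{[x_1,x_K]} u_i(x,t) dx = Σ_{i∈S} ∫_{[x_1,x_K]} u_i(x,0) dx for all t ≥ 0. -/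
open Filter Topology Set MeasureTheory intervalIntegral Matrix

/-!
Pairing with `v` turns the coefficient vector `αᵢ(t)` into the mass `∫ uᵢ(·, t)`, because each
basis function lives on a single mesh inside `[x_1, x_K]`. Differentiating the total mass along
the ODE, the phase-coupling term contributes `∑ⱼ (∑ᵢ T_{ji}) αⱼ·v = 0` and the transport term
contributes `cᵢ αᵢ·((G + Fᵢ)M⁻¹v) = 0`, so the total mass has zero derivative on `[0, ∞)`.
-/

section SupportedInSubinterval

variable {f : ℝ → ℝ} {a b c d : ℝ}

theorem IntervalIntegrable.of_forall_notMem_Icc_eq_zero (hf : IntervalIntegrable f volume c d)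
    (hac : a ≤ c) (hcd : c ≤ d) (hdb : d ≤ b) (hzero : ∀ y ∉ Icc c d, f y = 0) :
    IntervalIntegrable f volume a b := by
  rw [intervalIntegrable_iff_integrableOn_Icc_of_le hcd] at hf
  rw [intervalIntegrable_iff_integrableOn_Icc_of_le (hac.trans (hcd.trans hdb))]
  exact hf.of_forall_sdiff_eq_zero measurableSet_Icc fun y hy => hzero y hy.2

theorem intervalIntegral_eq_of_forall_notMem_Icc_eq_zero
    (hac : a ≤ c) (hcd : c ≤ d) (hdb : d ≤ b) (hzero : ∀ y ∉ Icc c d, f y = 0) :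
    ∫ y in a..b, f y = ∫ y in c..d, f y := by
  rw [integral_of_le (hac.trans (hcd.trans hdb)), integral_of_le hcd,
    ← integral_Icc_eq_integral_Ioc, ← integral_Icc_eq_integral_Ioc]
  exact setIntegral_eq_of_subset_of_forall_sdiff_eq_zero measurableSet_Icc
    (Icc_subset_Icc hac hdb) fun y hy => hzero y hy.2

end SupportedInSubinterval

theorem intervalIntegral_sum_mul_eq_dotProduct {Q : Type*} [Fintype Q] {a b : ℝ}
    (ψ : Q → ℝ → ℝ) (hψ : ∀ q, IntervalIntegrable (ψ q) volume a b) (β : Q → ℝ) :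
    ∫ y in a..b, ∑ q, β q * ψ q y = β ⬝ᵥ fun q => ∫ y in a..b, ψ q y := by
  rw [integral_finsetSum fun q _ => (hψ q).const_mul (β q)]
  simp only [intervalIntegral.integral_const_mul, dotProduct]

section MassBalance

variable {ι Q : Type*} [Fintype ι] [Fintype Q]

theorem sum_dotProduct_eq_zero_of_generator_of_mulVec_eq_zero
    (T : ι → ι → ℝ) (hT : ∀ j, ∑ i, T j i = 0) (c : ι → ℝ) (A : ι → Matrix Q Q ℝ)
    (v : Q → ℝ) (hA : ∀ i, A i *ᵥ v = 0) (β β' : ι → Q → ℝ)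
    (hβ' : ∀ i q, β' i q = ∑ j, β j q * T j i + c i * (β i ᵥ* A i) q) :
    ∑ i, β' i ⬝ᵥ v = 0 := by
  have hflux : ∀ i, (β i ᵥ* A i) ⬝ᵥ v = 0 := fun i => by
    rw [← dotProduct_mulVec, hA i, dotProduct_zero]
  calc ∑ i, β' i ⬝ᵥ v
      = ∑ i, (∑ j, T j i * (β j ⬝ᵥ v) + c i * ((β i ᵥ* A i) ⬝ᵥ v)) := by
        refine Finset.sum_congr rfl fun i _ => ?_
        simp only [dotProduct, hβ', add_mul, Finset.sum_add_distrib, Finset.sum_mul,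
          Finset.mul_sum]
        congr 1
        · rw [Finset.sum_comm]
          exact Finset.sum_congr rfl fun j _ => Finset.sum_congr rfl fun q _ => by ring
        · exact Finset.sum_congr rfl fun q _ => by ring
    _ = ∑ j, (∑ i, T j i) * (β j ⬝ᵥ v) := by
        simp only [hflux, mul_zero, add_zero, Finset.sum_mul]
        exact Finset.sum_comm
    _ = 0 := by simp only [hT, zero_mul, Finset.sum_const_zero]

theorem hasDerivAt_sum_dotProduct (α α' : ι → ℝ → Q → ℝ)
    (hα : ∀ i t q, HasDerivAt (fun s => α i s q) (α' i t q) t) (v : Q → ℝ) (t : ℝ) :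
    HasDerivAt (fun s => ∑ i, α i s ⬝ᵥ v) (∑ i, α' i t ⬝ᵥ v) t := by
  simp only [dotProduct]
  exact HasDerivAt.fun_sum fun i _ => HasDerivAt.fun_sum fun q _ => (hα i t q).mul_const _

theorem sum_dotProduct_eq_of_generator_of_mulVec_eq_zero
    (T : ι → ι → ℝ) (hT : ∀ j, ∑ i, T j i = 0) (c : ι → ℝ) (A : ι → Matrix Q Q ℝ)
    (v : Q → ℝ) (hA : ∀ i, A i *ᵥ v = 0) (α α' : ι → ℝ → Q → ℝ)
    (hα : ∀ i t q, HasDerivAt (fun s => α i s q) (α' i t q) t)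
    (hODE : ∀ i t, 0 ≤ t → ∀ q, α' i t q = ∑ j, α j t q * T j i + c i * (α i t ᵥ* A i) q)
    (t : ℝ) (ht : 0 ≤ t) :
    ∑ i, α i t ⬝ᵥ v = ∑ i, α i 0 ⬝ᵥ v := by
  have hderiv := hasDerivAt_sum_dotProduct α α' hα v
  refine constant_of_has_deriv_right_zero
    (fun s _ => (hderiv s).continuousAt.continuousWithinAt) (fun s hs => ?_) t ⟨ht, le_rfl⟩
  rw [← sum_dotProduct_eq_zero_of_generator_of_mulVec_eq_zero T hT c A v hA
    (fun i => α i s) (fun i => α' i s) (hODE · s hs.1)]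
  exact (hderiv s).hasDerivWithinAt

end MassBalance

theorem dg_mass_conservation_general
    (m : ℕ)
    (x : Fin (m + 1) → ℝ) (hx : ∀ k : Fin m, x k.castSucc < x k.succ)
    (Nb : Fin m → ℕ)
    (φ φ' : (k : Fin m) → Fin (Nb k) → ℝ → ℝ)
    (hsupp : ∀ k n (y : ℝ), y ∉ Set.Icc (x k.castSucc) (x k.succ) → φ k n y = 0)
    (hIntble : ∀ k n, IntervalIntegrable (φ k n) volume (x k.castSucc) (x k.succ))
    (ι : Type) [Fintype ι]
    (T : ι → ι → ℝ) (c : ι → ℝ)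
    (hTgen : ∀ j, ∑ i, T j i = 0)
    (F : ι → Matrix ((k : Fin m) × Fin (Nb k)) ((k : Fin m) × Fin (Nb k)) ℝ)
    (v : ((k : Fin m) × Fin (Nb k)) → ℝ)
    (hv : ∀ q : (k : Fin m) × Fin (Nb k),
      v q = ∫ y in (x q.1.castSucc)..(x q.1.succ), φ q.1 q.2 y)
    (hflux : ∀ i, ((dgStiff m x Nb φ φ' + F i) * (dgMass m x Nb φ)⁻¹) *ᵥ v = 0)
    (α α' : ι → ℝ → ((k : Fin m) × Fin (Nb k)) → ℝ)
    (hα : ∀ i t q, HasDerivAt (fun s => α i s q) (α' i t q) t)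
    (u : ι → ℝ → ℝ → ℝ)
    (hu : ∀ i y t, u i y t = ∑ q : (k : Fin m) × Fin (Nb k), α i t q * φ q.1 q.2 y)
    (hODE : ∀ i t, 0 ≤ t → ∀ q, α' i t q
      = (∑ j, α j t q * T j i)
        + c i * ((α i t) ᵥ* ((dgStiff m x Nb φ φ' + F i) * (dgMass m x Nb φ)⁻¹)) q) :
    (∀ t, 0 ≤ t → ∑ i, (α i t) ⬝ᵥ v = ∑ i, (α i 0) ⬝ᵥ v) ∧
    (∀ t, 0 ≤ t →
      ∑ i, (∫ y in (x 0)..(x (Fin.last m)), u i y t)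
        = ∑ i, (∫ y in (x 0)..(x (Fin.last m)), u i y 0)) := by
  have hmono : Monotone x := (Fin.strictMono_iff_lt_succ.mpr hx).monotone
  have hleft (k : Fin m) : x 0 ≤ x k.castSucc := hmono (Fin.zero_le _)
  have hright (k : Fin m) : x k.succ ≤ x (Fin.last m) := hmono (Fin.le_last _)
  have hIq (q : (k : Fin m) × Fin (Nb k)) :
      IntervalIntegrable (φ q.1 q.2) volume (x 0) (x (Fin.last m)) :=
    (hIntble q.1 q.2).of_forall_notMem_Icc_eq_zero (hleft q.1) (hx q.1).le (hright q.1)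
      (hsupp q.1 q.2)
  have hvq : v = fun q => ∫ y in (x 0)..(x (Fin.last m)), φ q.1 q.2 y := funext fun q => by
    rw [hv q, intervalIntegral_eq_of_forall_notMem_Icc_eq_zero (hleft q.1) (hx q.1).le
      (hright q.1) (hsupp q.1 q.2)]
  have hmass := sum_dotProduct_eq_of_generator_of_mulVec_eq_zero T hTgen c _ v hflux α α' hα hODE
  have hu_mass (i : ι) (t : ℝ) : ∫ y in (x 0)..(x (Fin.last m)), u i y t = α i t ⬝ᵥ v := by
    simp only [hu, hvq]
    exact intervalIntegral_sum_mul_eq_dotProduct (fun q => φ q.1 q.2) hIq (α i t)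
  refine ⟨hmass, fun t ht => ?_⟩
  simp only [hu_mass]
  exact hmass t ht

/-- **Conservation of total probability mass** (precise form of Remark 3).
DG stencil with `m = K - 1 ≥ 1` meshes `D_k = [x k.castSucc, x k.succ]`, integrable basis
functions `φ k n` vanishing outside their mesh (derivatives `φ' k n` on the mesh), mass
matrix `M` invertible, `v` the vector of mesh integrals `v_(k,n) = ∫_{D_k} φ_n^k`.
Assume the generator property `∑ᵢ T_{ji} = 0` for every `j`, and `(G + Fᵢ) M⁻¹ v = 0`
for every phase `i`.  If the coefficients satisfy the ODE system
`(d/dt) αᵢ(t) = ∑ⱼ αⱼ(t) T_{ji} + cᵢ αᵢ(t)(G + Fᵢ)M⁻¹` for all `i` and `t ≥ 0`, then the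
total mass `∑ᵢ αᵢ(t)·v = ∑ᵢ ∫_{[x_1,x_K]} uᵢ(x,t) dx` is constant in `t ≥ 0`; in
particular `∑ᵢ ∫_{[x_1,x_K]} uᵢ(x,t) dx = ∑ᵢ ∫_{[x_1,x_K]} uᵢ(x,0) dx` for all `t ≥ 0`. -/
theorem dg_mass_conservation
    (m : ℕ) (hm : 1 ≤ m)
    (x : Fin (m + 1) → ℝ) (hx : ∀ k : Fin m, x k.castSucc < x k.succ)
    (Nb : Fin m → ℕ) (hNb : ∀ k, 1 ≤ Nb k)
    (φ φ' : (k : Fin m) → Fin (Nb k) → ℝ → ℝ)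
    (hsupp : ∀ k n (y : ℝ), y ∉ Set.Icc (x k.castSucc) (x k.succ) → φ k n y = 0)
    (hIntble : ∀ k n, IntervalIntegrable (φ k n) volume (x k.castSucc) (x k.succ))
    (ι : Type) [Fintype ι] [Nonempty ι]
    (T : ι → ι → ℝ) (c : ι → ℝ) (hc : ∀ i, c i ≠ 0)
    (hTgen : ∀ j, ∑ i, T j i = 0)
    (hMunit : IsUnit (dgMass m x Nb φ))
    (F : ι → Matrix ((k : Fin m) × Fin (Nb k)) ((k : Fin m) × Fin (Nb k)) ℝ)
    (v : ((k : Fin m) × Fin (Nb k)) → ℝ)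
    (hv : ∀ q : (k : Fin m) × Fin (Nb k),
      v q = ∫ y in (x q.1.castSucc)..(x q.1.succ), φ q.1 q.2 y)
    (hflux : ∀ i, ((dgStiff m x Nb φ φ' + F i) * (dgMass m x Nb φ)⁻¹) *ᵥ v = 0)
    (α α' : ι → ℝ → ((k : Fin m) × Fin (Nb k)) → ℝ)
    (hα : ∀ i t q, HasDerivAt (fun s => α i s q) (α' i t q) t)
    (u : ι → ℝ → ℝ → ℝ)
    (hu : ∀ i y t, u i y t = ∑ q : (k : Fin m) × Fin (Nb k), α i t q * φ q.1 q.2 y)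
    (hODE : ∀ i t, 0 ≤ t → ∀ q, α' i t q
      = (∑ j, α j t q * T j i)
        + c i * ((α i t) ᵥ* ((dgStiff m x Nb φ φ' + F i) * (dgMass m x Nb φ)⁻¹)) q) :
    (∀ t, 0 ≤ t → ∑ i, (α i t) ⬝ᵥ v = ∑ i, (α i 0) ⬝ᵥ v) ∧
    (∀ t, 0 ≤ t →
      ∑ i, (∫ y in (x 0)..(x (Fin.last m)), u i y t)
        = ∑ i, (∫ y in (x 0)..(x (Fin.last m)), u i y 0)) :=
  dg_mass_conservation_general m x hx Nb φ φ' hsupp hIntble ι T c hTgen F v hv hflux α α' hα u hu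
    hODE
end
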